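/- Under the assumptions of the previous statement, if additionally the sequence (w_j) is nondecreasing and (N_j w_j) is nonincreasing in j, and J satisfies κ⁻² g⁻² N_J ≥ 1 ≥ κ⁻² g⁻² N_{J+1}, then ‖(κ⁻² g⁻² D² + I_p)⁻¹ θ*‖² ≤ 1/w_J². -/

import Mathlib

/-!
Expand `θ*` in the orthonormal eigenbasis `(e_j)`. The matrix `κ⁻²g⁻²D² + I` acts on `e_j` by
`κ⁻²g⁻²N_j + 1`, so by Parseval the left-hand side is `∑ (κ⁻²g⁻²N_j + 1)⁻² ⟨θ*, e_j⟩²`. Each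
shrinkage factor is at most `w_j / w_J`: below the cut-off because `N_j w_j ≥ N_J w_J` and
`κ⁻²g⁻²N_J ≥ 1`, above it because `w_j ≥ w_J`. The weighted ellipsoid constraint on `θ*` then
gives the bound `1 / w_J²`.
-/

open Matrix Finset

def sqnorm {n : Type*} [Fintype n] (x : n → ℝ) : ℝ := ∑ i, (x i) ^ 2

namespace Matrix

theorem IsSymm.mulVec_dotProduct_comm {n R : Type*} [Fintype n] [CommSemiring R]
    {A : Matrix n n R} (hA : A.IsSymm) (x y : n → R) : A *ᵥ x ⬝ᵥ y = x ⬝ᵥ A *ᵥ y := by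
  rw [dotProduct_mulVec, ← mulVec_transpose, hA.eq, dotProduct_comm]

theorem inv_mulVec_eq_inv_smul_of_mulVec_eq_smul {n K : Type*} [Fintype n] [DecidableEq n]
    [Field K] {A : Matrix n n K} (hA : IsUnit A) {v : n → K} {μ : K} (h : A *ᵥ v = μ • v) :
    A⁻¹ *ᵥ v = μ⁻¹ • v := by
  have hv : v = μ • A⁻¹ *ᵥ v := by
    rw [← mulVec_smul, ← h, mulVec_mulVec, nonsing_inv_mul A ((isUnit_iff_isUnit_det A).mp hA),
      one_mulVec]
  rcases eq_or_ne μ 0 with rfl | hμ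
  · rw [hv]; simp
  · conv_rhs => rw [hv]
    rw [smul_smul, inv_mul_cancel₀ hμ, one_smul]

theorem PosDef.eigenvalue_pos {n : Type*} [Fintype n] {A : Matrix n n ℝ} (hA : A.PosDef)
    {v : n → ℝ} (hv : v ≠ 0) {μ : ℝ} (h : A *ᵥ v = μ • v) : 0 < μ := by
  have hquad := hA.dotProduct_mulVec_pos hv
  rw [h, dotProduct_smul, smul_eq_mul] at hquad
  exact pos_of_mul_pos_left hquad (dotProduct_star_self_nonneg v)

end Matrix

theorem sqnorm_eq_sum_sq_dotProduct {ι : Type*} [Fintype ι] [DecidableEq ι] {e : ι → ι → ℝ}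
    (he : ∀ i j, e i ⬝ᵥ e j = if i = j then 1 else 0) (x : ι → ℝ) :
    sqnorm x = ∑ j, (x ⬝ᵥ e j) ^ 2 := by
  set E : Matrix ι ι ℝ := Matrix.of e
  have hE : Eᵀ * E = 1 := mul_eq_one_comm.mp <| by
    ext i j; simpa [E, mul_apply, dotProduct, one_apply] using he i j
  calc sqnorm x = x ⬝ᵥ (Eᵀ * E) *ᵥ x := by simp [hE, sqnorm, dotProduct, sq]
    _ = E *ᵥ x ⬝ᵥ E *ᵥ x := by rw [← mulVec_mulVec, dotProduct_mulVec, vecMul_transpose]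
    _ = ∑ j, (x ⬝ᵥ e j) ^ 2 := by simp [E, mulVec, dotProduct, mul_comm, sq]

theorem shrinkage_le_weight_ratio {ι : Type*} [LinearOrder ι] {c : ℝ} (hc : 0 ≤ c)
    {N w : ι → ℝ} (hN : ∀ j, 0 ≤ N j) (hw : ∀ j, 0 < w j) (hw_mono : Monotone w)
    (hNw_anti : Antitone fun j => N j * w j) {J : ι} (hJ : 1 ≤ c * N J) (j : ι) :
    (c * N j + 1)⁻¹ ≤ w j / w J := by
  have hcN : 0 ≤ c * N j := mul_nonneg hc (hN j)
  rw [inv_eq_one_div, div_le_div_iff₀ (by linarith) (hw J), one_mul, mul_comm (w j)]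
  rcases le_or_gt j J with hjJ | hJj
  · calc w J ≤ c * N J * w J := le_mul_of_one_le_left (hw J).le hJ
      _ = c * (N J * w J) := mul_assoc _ _ _
      _ ≤ c * (N j * w j) := mul_le_mul_of_nonneg_left (hNw_anti hjJ) hc
      _ ≤ (c * N j + 1) * w j := by nlinarith [hw j]
  · calc w J ≤ w j := hw_mono hJj.le
      _ ≤ (c * N j + 1) * w j := le_mul_of_one_le_left (hw j).le (by linarith)

theorem approx_projector_cutoff_bound_general
    {p : ℕ}
    (D2 : Matrix (Fin p) (Fin p) ℝ) (hD2 : D2.PosDef)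
    (e : Fin p → (Fin p → ℝ))
    (horth : ∀ i j : Fin p, e i ⬝ᵥ e j = if i = j then 1 else 0)
    (N : Fin p → ℝ) (heig : ∀ j, D2.mulVec (e j) = N j • e j)
    (g κ : ℝ)
    (w : Fin p → ℝ) (hw : ∀ j, 0 < w j)
    (hwmono : ∀ i j : Fin p, i ≤ j → w i ≤ w j)
    (hNwmono : ∀ i j : Fin p, i ≤ j → N j * w j ≤ N i * w i)
    (θs : Fin p → ℝ) (hθs : ∑ j, (w j) ^ 2 * (θs ⬝ᵥ e j) ^ 2 ≤ 1)
    (J : Fin p)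
    (hJ : 1 ≤ (κ ^ 2)⁻¹ * (g ^ 2)⁻¹ * N J) :
    sqnorm ((((κ ^ 2)⁻¹ * (g ^ 2)⁻¹) • D2 + (1 : Matrix (Fin p) (Fin p) ℝ))⁻¹.mulVec θs)
      ≤ 1 / (w J) ^ 2 := by
  set c := (κ ^ 2)⁻¹ * (g ^ 2)⁻¹
  have hc : 0 ≤ c := by positivity
  have hN : ∀ j, 0 < N j := fun j =>
    hD2.eigenvalue_pos (fun h0 => by simpa [h0] using horth j j) (heig j)
  have hA : (c • D2 + 1).PosDef := PosDef.posSemidef_add (hD2.posSemidef.smul hc) PosDef.one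
  have hAe : ∀ j, (c • D2 + 1) *ᵥ e j = (c * N j + 1) • e j := fun j => by
    rw [add_mulVec, smul_mulVec, heig j, one_mulVec, smul_smul, add_smul, one_smul]
  have hcoeff : ∀ j, (c • D2 + 1)⁻¹ *ᵥ θs ⬝ᵥ e j = (c * N j + 1)⁻¹ * (θs ⬝ᵥ e j) := fun j => by
    rw [(isHermitian_iff_isSymm.mp hA.inv.isHermitian).mulVec_dotProduct_comm,
      inv_mulVec_eq_inv_smul_of_mulVec_eq_smul hA.isUnit (hAe j), dotProduct_smul, smul_eq_mul]
  have hratio := shrinkage_le_weight_ratio hc (fun j => (hN j).le) hw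
    (fun i j h => hwmono i j h) (fun i j h => hNwmono i j h) hJ
  rw [sqnorm_eq_sum_sq_dotProduct horth]
  calc ∑ j, ((c • D2 + 1)⁻¹ *ᵥ θs ⬝ᵥ e j) ^ 2
      ≤ ∑ j, (w j) ^ 2 * (θs ⬝ᵥ e j) ^ 2 / (w J) ^ 2 := sum_le_sum fun j _ => by
        have hpos : 0 ≤ (c * N j + 1)⁻¹ := by have := hN j; positivity
        calc ((c • D2 + 1)⁻¹ *ᵥ θs ⬝ᵥ e j) ^ 2 = (c * N j + 1)⁻¹ ^ 2 * (θs ⬝ᵥ e j) ^ 2 := by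
              rw [hcoeff, mul_pow]
          _ ≤ (w j / w J) ^ 2 * (θs ⬝ᵥ e j) ^ 2 := by gcongr; exact hratio j
          _ = (w j) ^ 2 * (θs ⬝ᵥ e j) ^ 2 / (w J) ^ 2 := by ring
    _ = (∑ j, (w j) ^ 2 * (θs ⬝ᵥ e j) ^ 2) / (w J) ^ 2 := (sum_div _ _ _).symm
    _ ≤ 1 / (w J) ^ 2 := by gcongr

/-- under monotonicity of `w_j` and of `N_j w_j`, and with the cut-off
index `J` satisfying `κ⁻²g⁻² N_J ≥ 1 ≥ κ⁻²g⁻² N_j` for `j > J`, the approximate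
projector satisfies `‖(κ⁻²g⁻²D² + I)⁻¹ θ*‖² ≤ 1/w_J²`. -/
theorem approx_projector_cutoff_bound
    {p : ℕ}
    (D2 : Matrix (Fin p) (Fin p) ℝ) (hD2 : D2.PosDef)
    (e : Fin p → (Fin p → ℝ))
    (horth : ∀ i j : Fin p, e i ⬝ᵥ e j = if i = j then 1 else 0)
    (N : Fin p → ℝ) (heig : ∀ j, D2.mulVec (e j) = N j • e j)
    (hNord : ∀ i j : Fin p, i ≤ j → N j ≤ N i)
    (g κ : ℝ) (hg : 0 < g) (hκ : 0 < κ)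
    (w : Fin p → ℝ) (hw : ∀ j, 0 < w j)
    (hwmono : ∀ i j : Fin p, i ≤ j → w i ≤ w j)
    (hNwmono : ∀ i j : Fin p, i ≤ j → N j * w j ≤ N i * w i)
    (θs : Fin p → ℝ) (hθs : ∑ j, (w j) ^ 2 * (θs ⬝ᵥ e j) ^ 2 ≤ 1)
    (J : Fin p)
    (hJ : 1 ≤ (κ ^ 2)⁻¹ * (g ^ 2)⁻¹ * N J)
    (hJ' : ∀ j : Fin p, J < j → (κ ^ 2)⁻¹ * (g ^ 2)⁻¹ * N j ≤ 1) :
    sqnorm ((((κ ^ 2)⁻¹ * (g ^ 2)⁻¹) • D2 + (1 : Matrix (Fin p) (Fin p) ℝ))⁻¹.mulVec θs)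
      ≤ 1 / (w J) ^ 2 :=
  approx_projector_cutoff_bound_general D2 hD2 e horth N heig g κ w hw hwmono hNwmono θs hθs J hJ
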